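/- arXiv:2203.02025 — 2 statements merged into one kernel-verified Lean document; each statement's English description precedes it below -/
import Mathlib

section
/- Let M be a positive semidefinite n×n matrix, C ≥ 1, L ≥ 0, and P = Bᵀ(BᵀB)⁻¹B an orthogonal projection matrix such that M ⪯ C·L·P. Then for any vector v ∈ ℝⁿ with ‖v‖₂ ≤ 1, the matrix M' = (I − C⁻¹vvᵀ)M(I − C⁻¹vvᵀ) + L·vvᵀ satisfies 0 ⪯ M' ⪯ C·L·P', where P' = P + (I−P)vvᵀ(I−P)/(vᵀ(I−P)v) (assuming vᵀ(I−P)v > 0). -/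
open Matrix

private lemma vmv_mulVec {n : ℕ} (u w x : Fin n → ℝ) :
    vecMulVec u w *ᵥ x = (w ⬝ᵥ x) • u := by
  ext i
  simp only [mulVec, dotProduct, vecMulVec_apply, Pi.smul_apply, smul_eq_mul]
  rw [Finset.sum_mul]
  exact Finset.sum_congr rfl fun j _ => by ring

private lemma vmv_transpose {n : ℕ} (u w : Fin n → ℝ) :
    (vecMulVec u w)ᵀ = vecMulVec w u := by
  ext i j
  simp [vecMulVec_apply, mul_comm]

private lemma sym_dot {n : ℕ} {A : Matrix (Fin n) (Fin n) ℝ} (hA : Aᵀ = A)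
    (x y : Fin n → ℝ) : x ⬝ᵥ (A *ᵥ y) = (A *ᵥ x) ⬝ᵥ y := by
  rw [dotProduct_mulVec, ← mulVec_transpose, hA]

private lemma scalar_key (C L α β u r w mM yP : ℝ) (hC : 1 ≤ C) (hL : 0 ≤ L)
    (hβ : 0 < β) (hα : 0 ≤ α) (hαβ : α + β ≤ C)
    (hyP : yP = w - C⁻¹ * u * r - C⁻¹ * u * r + (C⁻¹ * u) * (C⁻¹ * u) * α)
    (hy : 0 ≤ C * L * yP - mM) :
    0 ≤ C * L * (w + β⁻¹ * ((u - r) * (u - r))) - (mM + L * (u * u)) := by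
  have hC0 : (0:ℝ) < C := by linarith
  have hαC : α < C := by linarith
  have hG : 0 ≤ C^2*(u-r)^2 + 2*u*r*β*C - u^2*α*β - u^2*β*C := by
    nlinarith [mul_nonneg hβ.le (sq_nonneg ((C-α)*r - α*(u-r))),
      mul_nonneg (mul_nonneg (sq_nonneg C) (by linarith : (0:ℝ) ≤ C - α - β)) (sq_nonneg (u-r)),
      sub_pos.2 hαC]
  have key : C * L * (w + β⁻¹ * ((u - r) * (u - r))) - C * L * yP - L * (u * u)
      = L * ((C^2*(u-r)^2 + 2*u*r*β*C - u^2*α*β - u^2*β*C) / (β * C)) := by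
    rw [hyP]
    field_simp
    ring
  have h2 : 0 ≤ L * ((C^2*(u-r)^2 + 2*u*r*β*C - u^2*α*β - u^2*β*C) / (β * C)) :=
    mul_nonneg hL (div_nonneg hG (by positivity))
  linarith [key, h2, hy]

private lemma sub_smul_dot {n : ℕ} (c : ℝ) (A B : Matrix (Fin n) (Fin n) ℝ) (y : Fin n → ℝ) :
    y ⬝ᵥ ((c • A - B) *ᵥ y) = c * (y ⬝ᵥ (A *ᵥ y)) - y ⬝ᵥ (B *ᵥ y) := by
  rw [sub_mulVec, dotProduct_sub, smul_mulVec, dotProduct_smul, smul_eq_mul]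

theorem loewner_order_update
    {n m : ℕ} (M P : Matrix (Fin n) (Fin n) ℝ) (B : Matrix (Fin m) (Fin n) ℝ)
    (C L : ℝ) (hC : 1 ≤ C) (hL : 0 ≤ L)
    (hM : M.PosSemidef)
    (hP : P = Bᵀ * (B * Bᵀ)⁻¹ * B)
    (hMP : ((C * L) • P - M).PosSemidef)
    (v : Fin n → ℝ) (hv : v ⬝ᵥ v ≤ 1)
    (hpos : 0 < v ⬝ᵥ ((1 - P) *ᵥ v))
    (M' P' : Matrix (Fin n) (Fin n) ℝ)
    (hM' : M' = (1 - C⁻¹ • vecMulVec v v) * M * (1 - C⁻¹ • vecMulVec v v)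
        + L • vecMulVec v v)
    (hP' : P' = P + (v ⬝ᵥ ((1 - P) *ᵥ v))⁻¹ •
        ((1 - P) * vecMulVec v v * (1 - P))) :
    M'.PosSemidef ∧ ((C * L) • P' - M').PosSemidef := by
  have hC0 : (0:ℝ) < C := lt_of_lt_of_le one_pos hC
  have hBBt : (B * Bᵀ)ᵀ = B * Bᵀ := by rw [transpose_mul, transpose_transpose]
  have hPt : Pᵀ = P := by
    rw [hP, transpose_mul, transpose_mul, transpose_transpose,
      transpose_nonsing_inv, hBBt, Matrix.mul_assoc]
  have hPP : P * P = P := by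
    by_cases h : IsUnit (B * Bᵀ).det
    · have h1 : (B * Bᵀ) * (B * Bᵀ)⁻¹ = 1 := mul_nonsing_inv _ h
      rw [hP]
      calc Bᵀ * (B * Bᵀ)⁻¹ * B * (Bᵀ * (B * Bᵀ)⁻¹ * B)
          = Bᵀ * (B * Bᵀ)⁻¹ * ((B * Bᵀ) * (B * Bᵀ)⁻¹) * B := by
            simp only [Matrix.mul_assoc]
        _ = Bᵀ * (B * Bᵀ)⁻¹ * B := by rw [h1, Matrix.mul_one]
    · rw [hP, nonsing_inv_apply_not_isUnit _ h]
      simp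
  have herm : ∀ (X : Matrix (Fin n) (Fin n) ℝ), Xᵀ = X → X.IsHermitian := fun X hX => by
    rwa [IsHermitian, conjTranspose_eq_transpose_of_trivial]
  have hMt : Mᵀ = M := by
    have h1 := hM.1
    rwa [IsHermitian, conjTranspose_eq_transpose_of_trivial] at h1
  set T : Matrix (Fin n) (Fin n) ℝ := 1 - C⁻¹ • vecMulVec v v with hTdef
  have hTt : Tᵀ = T := by
    rw [hTdef]
    simp [transpose_sub, transpose_smul, vmv_transpose]
  have hT : ∀ x : Fin n → ℝ, T *ᵥ x = x - (C⁻¹ * (v ⬝ᵥ x)) • v := by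
    intro x
    rw [hTdef, sub_mulVec, one_mulVec, smul_mulVec, vmv_mulVec, smul_smul]
  have hM't : M'ᵀ = M' := by
    rw [hM', transpose_add, transpose_smul, vmv_transpose, transpose_mul, transpose_mul,
      hTt, hMt, ← Matrix.mul_assoc]
  have hQt : (1 - P)ᵀ = 1 - P := by rw [transpose_sub, transpose_one, hPt]
  have hP't : P'ᵀ = P' := by
    rw [hP', transpose_add, transpose_smul, transpose_mul, transpose_mul,
      hQt, vmv_transpose, hPt, ← Matrix.mul_assoc]
  have hM'val : ∀ x : Fin n → ℝ, x ⬝ᵥ (M' *ᵥ x)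
      = (T *ᵥ x) ⬝ᵥ (M *ᵥ (T *ᵥ x)) + L * ((v ⬝ᵥ x) * (v ⬝ᵥ x)) := by
    intro x
    rw [hM', add_mulVec, dotProduct_add, smul_mulVec, vmv_mulVec,
      dotProduct_smul, dotProduct_smul, smul_eq_mul, smul_eq_mul, dotProduct_comm x v]
    congr 1
    simp only [← mulVec_mulVec]
    rw [sym_dot hTt]
  -- positive semidefiniteness of M'
  have hM'psd : M'.PosSemidef := by
    refine PosSemidef.of_dotProduct_mulVec_nonneg (herm _ hM't) fun x => ?_
    have h1 := hM.dotProduct_mulVec_nonneg (T *ᵥ x)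
    simp only [star_trivial] at h1 ⊢
    rw [hM'val x]
    have h2 : 0 ≤ L * ((v ⬝ᵥ x) * (v ⬝ᵥ x)) := mul_nonneg hL (mul_self_nonneg _)
    linarith
  refine ⟨hM'psd, ?_⟩
  -- scalar facts
  have hα0 : 0 ≤ v ⬝ᵥ (P *ᵥ v) := by
    have h1 : v ⬝ᵥ (P *ᵥ v) = (P *ᵥ v) ⬝ᵥ (P *ᵥ v) := by
      conv_lhs => rw [← hPP, ← mulVec_mulVec]
      rw [sym_dot hPt]
    rw [h1, dotProduct]
    exact Finset.sum_nonneg fun i _ => mul_self_nonneg _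
  have hβval : v ⬝ᵥ ((1 - P) *ᵥ v) = v ⬝ᵥ v - v ⬝ᵥ (P *ᵥ v) := by
    rw [sub_mulVec, one_mulVec, dotProduct_sub]
  have hαβ : v ⬝ᵥ (P *ᵥ v) + v ⬝ᵥ ((1 - P) *ᵥ v) ≤ C := by
    rw [hβval]; linarith
  -- expansion lemma for P-quadratic form at shifted points
  have expand : ∀ (x : Fin n → ℝ) (c : ℝ),
      (x - c • v) ⬝ᵥ (P *ᵥ (x - c • v))
        = x ⬝ᵥ (P *ᵥ x) - c * (v ⬝ᵥ (P *ᵥ x)) - c * (x ⬝ᵥ (P *ᵥ v))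
          + c * c * (v ⬝ᵥ (P *ᵥ v)) := by
    intro x c
    rw [mulVec_sub, mulVec_smul]
    simp only [dotProduct_sub, sub_dotProduct, dotProduct_smul, smul_dotProduct, smul_eq_mul]
    ring
  refine PosSemidef.of_dotProduct_mulVec_nonneg (herm _ (by rw [transpose_sub, transpose_smul, hP't, hM't])) fun x => ?_
  simp only [star_trivial]
  have hy0 := hMP.dotProduct_mulVec_nonneg (T *ᵥ x)
  simp only [star_trivial] at hy0
  rw [sub_smul_dot] at hy0
  rw [sub_smul_dot]
  rw [hM'val x]
  have hPy : (T *ᵥ x) ⬝ᵥ (P *ᵥ (T *ᵥ x))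
      = x ⬝ᵥ (P *ᵥ x) - C⁻¹ * (v ⬝ᵥ x) * ((P *ᵥ v) ⬝ᵥ x)
        - C⁻¹ * (v ⬝ᵥ x) * ((P *ᵥ v) ⬝ᵥ x)
        + (C⁻¹ * (v ⬝ᵥ x)) * (C⁻¹ * (v ⬝ᵥ x)) * (v ⬝ᵥ (P *ᵥ v)) := by
    rw [hT x, expand x (C⁻¹ * (v ⬝ᵥ x)), sym_dot hPt v x, dotProduct_comm x (P *ᵥ v)]
  rw [hPy] at hy0
  have hP'val : x ⬝ᵥ (P' *ᵥ x)
      = x ⬝ᵥ (P *ᵥ x) + (v ⬝ᵥ ((1 - P) *ᵥ v))⁻¹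
        * ((v ⬝ᵥ x - (P *ᵥ v) ⬝ᵥ x) * (v ⬝ᵥ x - (P *ᵥ v) ⬝ᵥ x)) := by
    rw [hP', add_mulVec, dotProduct_add, smul_mulVec, dotProduct_smul, smul_eq_mul]
    congr 1
    simp only [← mulVec_mulVec]
    rw [vmv_mulVec, mulVec_smul, dotProduct_smul, smul_eq_mul]
    rw [show v ⬝ᵥ ((1 - P) *ᵥ x) = v ⬝ᵥ x - (P *ᵥ v) ⬝ᵥ x from by
        rw [sub_mulVec, one_mulVec, dotProduct_sub, sym_dot hPt],
      show x ⬝ᵥ ((1 - P) *ᵥ v) = v ⬝ᵥ x - (P *ᵥ v) ⬝ᵥ x from by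
        rw [sub_mulVec, one_mulVec, dotProduct_sub, dotProduct_comm x v,
          dotProduct_comm x (P *ᵥ v)]]
  rw [hP'val]
  exact scalar_key C L (v ⬝ᵥ (P *ᵥ v)) (v ⬝ᵥ ((1 - P) *ᵥ v)) (v ⬝ᵥ x)
    ((P *ᵥ v) ⬝ᵥ x) (x ⬝ᵥ (P *ᵥ x)) ((T *ᵥ x) ⬝ᵥ (M *ᵥ (T *ᵥ x))) _
    hC hL hpos hα0 hαβ rfl hy0
end

section
/- Under the setup of the previous tree lemma, if ‖w(v)‖_∞ ≤ D for every internal node v and every leaf is at depth at most log₂ k from the root r, then for every leaf l: ‖s(l) − (α(l)/α(r))·s(r)‖_∞ ≤ (log₂ k)·D, and consequently for any two leaves l, l': ‖(s(l)/α(l) − s(l')/α(l'))/(1/α(l) + 1/α(l'))‖_∞ ≤ 2(log₂ k)·D. -/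
theorem tree_path_bound_aux
    {V : Type*} {d : ℕ}
    (internal : V → Prop) (lc rc : V → V)
    (s : V → Fin d → ℝ) (α : V → ℝ) (hα : ∀ v, 0 < α v)
    (hs : ∀ v, internal v → s v = s (lc v) + s (rc v))
    (hα' : ∀ v, internal v → α v = α (lc v) + α (rc v))
    (w : V → Fin d → ℝ)
    (hw : ∀ v, w v = (α v)⁻¹ • (α (rc v) • s (lc v) - α (lc v) • s (rc v)))
    (D : ℝ) (hD : ∀ v, internal v → ‖w v‖ ≤ D)
    (m : ℕ) (p : ℕ → V)
    (hp : ∀ i < m, internal (p (i + 1)) ∧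
      (p i = lc (p (i + 1)) ∨ p i = rc (p (i + 1)))) :
    α (p 0) ≤ α (p m) ∧
    ‖s (p 0) - (α (p 0) / α (p m)) • s (p m)‖ ≤ m * D := by
  induction m with
  | zero => simp [div_self (hα (p 0)).ne']
  | succ n ih =>
    obtain ⟨hmon, hbd⟩ := ih (fun i hi => hp i (by omega))
    obtain ⟨hint, hc⟩ := hp n (by omega)
    have hv := hα (p (n+1))
    have hn := hα (p n)
    have hl := hα (lc (p (n+1)))
    have hr := hα (rc (p (n+1)))
    have h0 := hα (p 0)
    have hαsum := hα' _ hint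
    have hαn : α (p n) ≤ α (p (n+1)) := by
      rcases hc with h | h <;> rw [hαsum, ← h] <;> nlinarith
    have hC : ‖s (p n) - (α (p n) / α (p (n+1))) • s (p (n+1))‖ ≤ D := by
      have hssum := hs _ hint
      rcases hc with h | h
      · have : s (p n) - (α (p n) / α (p (n+1))) • s (p (n+1)) = w (p (n+1)) := by
          rw [hw, h, hssum]
          funext j
          simp only [Pi.sub_apply, Pi.smul_apply, Pi.add_apply, smul_eq_mul]
          have hv' : α (p (n+1)) ≠ 0 := hv.ne'
          field_simp
          rw [hαsum] ; ring
        rw [this]; exact hD _ hint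
      · have : s (p n) - (α (p n) / α (p (n+1))) • s (p (n+1)) = -w (p (n+1)) := by
          rw [hw, h, hssum]
          funext j
          simp only [Pi.sub_apply, Pi.smul_apply, Pi.add_apply, Pi.neg_apply, smul_eq_mul]
          have hv' : α (p (n+1)) ≠ 0 := hv.ne'
          field_simp
          rw [hαsum] ; ring
        rw [this, norm_neg]; exact hD _ hint
    constructor
    · exact hmon.trans hαn
    · have hdecomp : s (p 0) - (α (p 0) / α (p (n+1))) • s (p (n+1)) =
          (s (p 0) - (α (p 0) / α (p n)) • s (p n)) +
          (α (p 0) / α (p n)) • (s (p n) - (α (p n) / α (p (n+1))) • s (p (n+1))) := by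
        rw [smul_sub, smul_smul]
        have : α (p 0) / α (p n) * (α (p n) / α (p (n+1))) = α (p 0) / α (p (n+1)) := by
          field_simp
        rw [this]; abel
      calc ‖s (p 0) - (α (p 0) / α (p (n+1))) • s (p (n+1))‖
          ≤ ‖s (p 0) - (α (p 0) / α (p n)) • s (p n)‖ +
            ‖(α (p 0) / α (p n)) • (s (p n) - (α (p n) / α (p (n+1))) • s (p (n+1)))‖ := by
            rw [hdecomp]; exact norm_add_le _ _
        _ ≤ n * D + 1 * D := by
            refine add_le_add hbd ?_
            rw [norm_smul, Real.norm_eq_abs, abs_of_pos (by positivity)]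
            have h1 : α (p 0) / α (p n) ≤ 1 := (div_le_one hn).2 hmon
            have hDnn : 0 ≤ D := le_trans (norm_nonneg _) hC
            exact mul_le_mul h1 hC (norm_nonneg _) zero_le_one
        _ = (n + 1 : ℕ) * D := by push_cast; ring

/-- `‖·‖` on `Fin d → ℝ` is the supremum norm. -/
theorem tree_leaf_root_discrepancy
    {V : Type*} {d : ℕ} (k : ℕ) (hk : 2 ≤ k)
    (internal : V → Prop) (lc rc : V → V)
    (s : V → Fin d → ℝ) (α : V → ℝ) (hα : ∀ v, 0 < α v)
    (hs : ∀ v, internal v → s v = s (lc v) + s (rc v))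
    (hα' : ∀ v, internal v → α v = α (lc v) + α (rc v))
    (w : V → Fin d → ℝ)
    (hw : ∀ v, w v = (α v)⁻¹ • (α (rc v) • s (lc v) - α (lc v) • s (rc v)))
    (D : ℝ) (hD' : 0 ≤ D) (hD : ∀ v, internal v → ‖w v‖ ≤ D)
    (r : V)
    -- a path from the leaf `p₁ 0` to the root `p₁ m₁ = r`, of depth `m₁ ≤ log₂ k`
    (m₁ : ℕ) (p₁ : ℕ → V) (hp₁r : p₁ m₁ = r)
    (hp₁ : ∀ i < m₁, internal (p₁ (i + 1)) ∧
      (p₁ i = lc (p₁ (i + 1)) ∨ p₁ i = rc (p₁ (i + 1))))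
    (hm₁ : (m₁ : ℝ) ≤ Real.logb 2 k)
    -- a path from the leaf `p₂ 0` to the root, of depth `m₂ ≤ log₂ k`
    (m₂ : ℕ) (p₂ : ℕ → V) (hp₂r : p₂ m₂ = r)
    (hp₂ : ∀ i < m₂, internal (p₂ (i + 1)) ∧
      (p₂ i = lc (p₂ (i + 1)) ∨ p₂ i = rc (p₂ (i + 1))))
    (hm₂ : (m₂ : ℝ) ≤ Real.logb 2 k) :
    ‖s (p₁ 0) - (α (p₁ 0) / α r) • s r‖ ≤ Real.logb 2 k * D ∧
    ‖(1 / (1 / α (p₁ 0) + 1 / α (p₂ 0))) •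
        ((α (p₁ 0))⁻¹ • s (p₁ 0) - (α (p₂ 0))⁻¹ • s (p₂ 0))‖
      ≤ 2 * Real.logb 2 k * D := by
  obtain ⟨hmon₁, hbd₁⟩ := tree_path_bound_aux internal lc rc s α hα hs hα' w hw D hD m₁ p₁ hp₁
  obtain ⟨hmon₂, hbd₂⟩ := tree_path_bound_aux internal lc rc s α hα hs hα' w hw D hD m₂ p₂ hp₂
  rw [hp₁r] at hbd₁
  rw [hp₂r] at hbd₂
  set a := α (p₁ 0) with ha
  set b := α (p₂ 0) with hb
  have hap : 0 < a := hα _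
  have hbp : 0 < b := hα _
  have hrp : 0 < α r := hα _
  have he₁ : ‖s (p₁ 0) - (a / α r) • s r‖ ≤ Real.logb 2 k * D :=
    hbd₁.trans (mul_le_mul_of_nonneg_right hm₁ hD')
  have he₂ : ‖s (p₂ 0) - (b / α r) • s r‖ ≤ Real.logb 2 k * D :=
    hbd₂.trans (mul_le_mul_of_nonneg_right hm₂ hD')
  refine ⟨he₁, ?_⟩
  set e₁ := s (p₁ 0) - (a / α r) • s r with he1def
  set e₂ := s (p₂ 0) - (b / α r) • s r with he2def
  have hdecomp : a⁻¹ • s (p₁ 0) - b⁻¹ • s (p₂ 0) = a⁻¹ • e₁ - b⁻¹ • e₂ := by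
    rw [he1def, he2def, smul_sub, smul_sub, smul_smul, smul_smul]
    have h1 : a⁻¹ * (a / α r) = (α r)⁻¹ := by field_simp
    have h2 : b⁻¹ * (b / α r) = (α r)⁻¹ := by field_simp
    rw [h1, h2]; abel
  rw [hdecomp]
  set c := 1 / (1 / a + 1 / b) with hc
  have hcp : 0 < c := by positivity
  have hca : c * a⁻¹ ≤ 1 := by
    rw [hc]
    rw [div_mul_eq_mul_div, one_mul, div_le_one (by positivity)]
    have : a⁻¹ = 1 / a := (one_div a).symm
    rw [this]
    have : 0 < 1 / b := by positivity
    linarith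
  have hcb : c * b⁻¹ ≤ 1 := by
    rw [hc]
    rw [div_mul_eq_mul_div, one_mul, div_le_one (by positivity)]
    have : b⁻¹ = 1 / b := (one_div b).symm
    rw [this]
    have : 0 < 1 / a := by positivity
    linarith
  calc ‖c • (a⁻¹ • e₁ - b⁻¹ • e₂)‖
      ≤ ‖c • a⁻¹ • e₁‖ + ‖c • b⁻¹ • e₂‖ := by
        rw [smul_sub]; exact norm_sub_le _ _
    _ = (c * a⁻¹) * ‖e₁‖ + (c * b⁻¹) * ‖e₂‖ := by
        rw [smul_smul, smul_smul, norm_smul, norm_smul, Real.norm_eq_abs, Real.norm_eq_abs,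
          abs_of_pos (by positivity), abs_of_pos (by positivity)]
    _ ≤ 1 * (Real.logb 2 k * D) + 1 * (Real.logb 2 k * D) := by
        exact add_le_add (mul_le_mul hca he₁ (norm_nonneg _) zero_le_one)
          (mul_le_mul hcb he₂ (norm_nonneg _) zero_le_one)
    _ = 2 * Real.logb 2 k * D := by ring
end
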